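/- arXiv:2509.07372 — 3 statements merged into one kernel-verified Lean document; each statement's English description precedes it below -/
import Mathlib

section
/- Let x_1, …, x_n ∈ ℝ^d be arbitrary points, r > 0 and α > 0, and set c = 2m_0/(m_2 r²). Then for every real λ ≠ c: λ is an eigenvalue of the n×n matrix L̃ if and only if there exists f ∈ F with f not identically zero and (L̃_n f)(x) = λ f(x) for all x ∈ ℝ^d; moreover the eigenspace {f ∈ F : L̃_n f = λ f} has the same finite dimension as the kernel of L̃ − λI in ℝⁿ. In other words, L̃ and L̃_n have the same eigenvalues with the same multiplicities, except possibly at c. -/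
open MeasureTheory ProbabilityTheory Filter
open scoped ENNReal NNReal BigOperators

/-- The ℓ^p norm on `ℝ^d`, for `p ∈ [1,∞]` (encoded as `p : ℝ≥0∞`). -/
noncomputable def lpNormR {d : ℕ} (p : ℝ≥0∞) (x : Fin d → ℝ) : ℝ :=
  if p = ∞ then ⨆ i, |x i| else (∑ i, |x i| ^ p.toReal) ^ (1 / p.toReal)

/-- The Gaussian weight `ρ(x) = exp(-∑ x_i²/(2σ_i²))`. -/
noncomputable def gaussWeight {d : ℕ} (σ : Fin d → ℝ) (x : Fin d → ℝ) : ℝ :=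
  Real.exp (-(∑ i, x i ^ 2 / (2 * σ i ^ 2)))

/-- The product Gaussian measure `N_d(0, diag(σ_1²,…,σ_d²))` on `ℝ^d`. -/
noncomputable def gaussPi (d : ℕ) (σ : Fin d → ℝ) : Measure (Fin d → ℝ) :=
  Measure.pi fun i => gaussianReal 0 (Real.toNNReal (σ i ^ 2))

/-- The moment constant `m_l = ∫_{ℝ^d} |u_1|^l 1(‖u‖_p ≤ 1) g(‖u‖_p) du`. -/
noncomputable def mmt (d : ℕ) (hd : 0 < d) (p : ℝ≥0∞) (g : ℝ → ℝ) (l : ℕ) : ℝ :=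
  ∫ u : Fin d → ℝ,
    if lpNormR p u ≤ 1 then |u ⟨0, hd⟩| ^ l * g (lpNormR p u) else 0

/-- The affinity matrix `K(i,j) = 1(‖x_i-x_j‖_p ≤ r) g(‖x_i-x_j‖_p/r)`. -/
noncomputable def affK {d n : ℕ} (p : ℝ≥0∞) (g : ℝ → ℝ) (r : ℝ)
    (x : Fin n → Fin d → ℝ) : Matrix (Fin n) (Fin n) ℝ :=
  Matrix.of fun i j =>
    if lpNormR p (x i - x j) ≤ r then g (lpNormR p (x i - x j) / r) else 0

/-- The scaled random-walk Laplacian `L = (2m_0/(m_2 r²)) (I - D⁻¹K)`. -/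
noncomputable def lapL {d n : ℕ} (hd : 0 < d) (p : ℝ≥0∞) (g : ℝ → ℝ) (r : ℝ)
    (x : Fin n → Fin d → ℝ) : Matrix (Fin n) (Fin n) ℝ :=
  (2 * mmt d hd p g 0 / (mmt d hd p g 2 * r ^ 2)) •
    (1 - Matrix.of fun i j => affK p g r x i j / ∑ l, affK p g r x i l)

/-- The eigenvalues of a matrix (real roots of the characteristic polynomial,
with multiplicity), sorted in non-decreasing order. -/
noncomputable def sortedEigs {n : ℕ} (A : Matrix (Fin n) (Fin n) ℝ) : List ℝ :=
  Multiset.sort (Matrix.charpoly A).roots (· ≤ ·)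

/-- The number of eigenvalues (real roots of the characteristic polynomial, with
multiplicity) that are `≤ δ`. -/
noncomputable def eigCountLE {n : ℕ} (A : Matrix (Fin n) (Fin n) ℝ) (δ : ℝ) : ℕ :=
  Multiset.card (Multiset.filter (fun t => t ≤ δ) (Matrix.charpoly A).roots)

/-- The `m`-th physicist's Hermite polynomial `H_m(x) = (-1)^m e^{x²} (d/dx)^m e^{-x²}`. -/
noncomputable def physHermite (m : ℕ) (x : ℝ) : ℝ :=
  (-1 : ℝ) ^ m * Real.exp (x ^ 2) * iteratedDeriv m (fun t => Real.exp (-t ^ 2)) x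

/-- The sigmoid function `s(t) = (1+e^{-t})⁻¹`. -/
noncomputable def sigmoid (t : ℝ) : ℝ := (1 + Real.exp (-t))⁻¹

/-- The smoothed affinity matrix `K̃(i,j) = s(α(r²-‖x_i-x_j‖_p²)) g*(‖x_i-x_j‖_p/r)`. -/
noncomputable def affKs {d n : ℕ} (p : ℝ≥0∞) (gs : ℝ → ℝ) (α r : ℝ)
    (x : Fin n → Fin d → ℝ) : Matrix (Fin n) (Fin n) ℝ :=
  Matrix.of fun i j =>
    sigmoid (α * (r ^ 2 - lpNormR p (x i - x j) ^ 2)) * gs (lpNormR p (x i - x j) / r)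

/-- The smoothed scaled random-walk Laplacian `L̃ = (2m_0/(m_2 r²)) (I - D̃⁻¹K̃)`. -/
noncomputable def lapLs {d n : ℕ} (hd : 0 < d) (p : ℝ≥0∞) (g gs : ℝ → ℝ) (α r : ℝ)
    (x : Fin n → Fin d → ℝ) : Matrix (Fin n) (Fin n) ℝ :=
  (2 * mmt d hd p g 0 / (mmt d hd p g 2 * r ^ 2)) •
    (1 - Matrix.of fun i j => affKs p gs α r x i j / ∑ l, affKs p gs α r x i l)

/-- The ℓ²→ℓ² operator norm of a real square matrix. -/
noncomputable def matOpNorm {n : ℕ} (A : Matrix (Fin n) (Fin n) ℝ) : ℝ :=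
  ‖Matrix.toEuclideanCLM (𝕜 := ℝ) A‖

/-- The weighted L² norm `‖f‖_F = (∫ f(x)² ρ(x)² dx)^{1/2}`. -/
noncomputable def Fnorm {d : ℕ} (σ : Fin d → ℝ) (f : (Fin d → ℝ) → ℝ) : ℝ :=
  (∫ x : Fin d → ℝ, f x ^ 2 * gaussWeight σ x ^ 2) ^ ((1 : ℝ) / 2)

/-- Partial derivative `∂f/∂x_i`. -/
noncomputable def pd {d : ℕ} (i : Fin d) (f : (Fin d → ℝ) → ℝ) : (Fin d → ℝ) → ℝ :=
  fun x => fderiv ℝ f x (Pi.single i 1)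

/-- The weighted Laplace–Beltrami operator
`Δ_ρ f(x) = -∑ ∂²f/∂x_i²(x) + ∑ (2x_i/σ_i²) ∂f/∂x_i(x)`. -/
noncomputable def deltaRho {d : ℕ} (σ : Fin d → ℝ) (f : (Fin d → ℝ) → ℝ) :
    (Fin d → ℝ) → ℝ :=
  fun x => -(∑ i, pd i (pd i f) x) + ∑ i, (2 * x i / σ i ^ 2) * pd i f x

/-- The deterministic integral operator `T_r` (Tn). -/
noncomputable def Tn {d : ℕ} (hd : 0 < d) (p : ℝ≥0∞) (σ : Fin d → ℝ) (g : ℝ → ℝ)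
    (r : ℝ) (f : (Fin d → ℝ) → ℝ) (x : Fin d → ℝ) : ℝ :=
  (2 / (r ^ (d + 2) * mmt d hd p g 2 * gaussWeight σ x)) *
    ∫ y : Fin d → ℝ,
      if lpNormR p (x - y) ≤ r then
        g (lpNormR p (x - y) / r) * (f x - f y) * gaussWeight σ y
      else 0

/-- The intermediate operator `T̃_r`. -/
noncomputable def TtildeOp {d : ℕ} (hd : 0 < d) (p : ℝ≥0∞) (σ : Fin d → ℝ)
    (g : ℝ → ℝ) (r : ℝ) (f : (Fin d → ℝ) → ℝ) (x : Fin d → ℝ) : ℝ :=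
  (2 * mmt d hd p g 0 / (mmt d hd p g 2 * r ^ 2)) *
    (∫ y : Fin d → ℝ,
      if lpNormR p (x - y) ≤ r then
        g (lpNormR p (x - y) / r) * (f x - f y) * gaussWeight σ y
      else 0) /
    (∫ y : Fin d → ℝ,
      if lpNormR p (x - y) ≤ r then g (lpNormR p (x - y) / r) * gaussWeight σ y else 0)

/-- The empirical operator `L̃_n`. -/
noncomputable def empOp {d n : ℕ} (hd : 0 < d) (p : ℝ≥0∞) (g gs : ℝ → ℝ) (α r : ℝ)
    (x : Fin n → Fin d → ℝ) (f : (Fin d → ℝ) → ℝ) (y : Fin d → ℝ) : ℝ :=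
  (2 * mmt d hd p g 0 / (mmt d hd p g 2 * r ^ 2)) *
    (∑ j, sigmoid (α * (r ^ 2 - lpNormR p (y - x j) ^ 2)) *
        gs (lpNormR p (y - x j) / r) * (f y - f (x j))) /
    (∑ j, sigmoid (α * (r ^ 2 - lpNormR p (y - x j) ^ 2)) *
        gs (lpNormR p (y - x j) / r))

/-!
Let `P(y, j) = w(y, j) / ∑ₗ w(y, l)` be the row-normalised smoothed weights, `A v = P v` the
extension of a vector on the sample to a function on `ℝ^d`, and `R f = f ∘ x` the restriction to
the sample. Then `L̃_n = c (1 - A R)` and `L̃ = c (1 - R A)`, so for `λ ≠ c` the `λ`-eigenspaces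
are the fixed spaces of `(s A) R` and `R (s A)` with `s = c / (c - λ)`, between which `R` and
`s A` are mutually inverse. Eigenfunctions lie in the range of `A`, hence are measurable and
bounded by `∑ⱼ |v_j|`, so they automatically belong to the Gaussian-weighted space `F`.
-/

open Matrix

namespace LinearMap

variable {R M N : Type*} [Semiring R] [AddCommGroup M] [AddCommGroup N] [Module R M] [Module R N]

theorem mem_ker_one_sub_iff {T : M →ₗ[R] M} {f : M} : f ∈ ker (1 - T) ↔ T f = f := by
  rw [mem_ker, sub_apply, Module.End.one_apply, sub_eq_zero, eq_comm]

def kerOneSubCompEquiv (A : N →ₗ[R] M) (B : M →ₗ[R] N) :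
    ker (1 - A ∘ₗ B) ≃ₗ[R] ker (1 - B ∘ₗ A) :=
  LinearEquiv.ofLinearMap
    (B.restrict fun f hf => mem_ker_one_sub_iff.2 <| congrArg B (mem_ker_one_sub_iff.1 hf))
    (A.restrict fun v hv => mem_ker_one_sub_iff.2 <| congrArg A (mem_ker_one_sub_iff.1 hv))
    (by ext ⟨v, hv⟩; exact mem_ker_one_sub_iff.1 hv)
    (by ext ⟨f, hf⟩; exact mem_ker_one_sub_iff.1 hf)

theorem ker_one_sub_comp_ne_bot_iff (A : N →ₗ[R] M) (B : M →ₗ[R] N) :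
    ker (1 - A ∘ₗ B) ≠ ⊥ ↔ ker (1 - B ∘ₗ A) ≠ ⊥ := by
  rw [← Submodule.nontrivial_iff_ne_bot, ← Submodule.nontrivial_iff_ne_bot]
  exact (kerOneSubCompEquiv A B).toEquiv.nontrivial_congr

theorem mem_ker_one_sub_smul_iff {K : Type*} [Field K] [Module K M] (T : M →ₗ[K] M) {c μ : K}
    (hμ : μ ≠ c) {f : M} : f ∈ ker (1 - (c / (c - μ)) • T) ↔ c • (f - T f) = μ • f := by
  have hcμ : c - μ ≠ 0 := sub_ne_zero.2 hμ.symm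
  rw [mem_ker_one_sub_iff, smul_apply, ← (smul_right_injective M hcμ).eq_iff, smul_smul,
    mul_div_cancel₀ _ hcμ, smul_sub, sub_smul, eq_sub_iff_add_eq, sub_eq_iff_eq_add, add_comm,
    eq_comm]

end LinearMap

section RowNormalize

variable {Y ι : Type*} [Fintype ι]

noncomputable def rowNormalize (w : Y → ι → ℝ) : Matrix Y ι ℝ :=
  Matrix.of fun y j => w y j / ∑ l, w y l

variable {w : Y → ι → ℝ}

theorem rowNormalize_nonneg (hw : ∀ y j, 0 ≤ w y j) (y : Y) (j : ι) :
    0 ≤ rowNormalize w y j :=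
  div_nonneg (hw y j) (Finset.sum_nonneg fun l _ => hw y l)

theorem rowNormalize_le_one (hw : ∀ y j, 0 ≤ w y j) (y : Y) (j : ι) :
    rowNormalize w y j ≤ 1 :=
  div_le_one_of_le₀ (Finset.single_le_sum (fun l _ => hw y l) (Finset.mem_univ j))
    (Finset.sum_nonneg fun l _ => hw y l)

theorem abs_rowNormalize_mulVec_le (hw : ∀ y j, 0 ≤ w y j) (v : ι → ℝ) (y : Y) :
    |(rowNormalize w *ᵥ v) y| ≤ ∑ j, |v j| :=
  calc |(rowNormalize w *ᵥ v) y| ≤ ∑ j, |rowNormalize w y j * v j| :=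
        Finset.abs_sum_le_sum_abs _ _
    _ ≤ ∑ j, |v j| := Finset.sum_le_sum fun j _ => by
        rw [abs_mul, abs_of_nonneg (rowNormalize_nonneg hw y j)]
        exact mul_le_of_le_one_left (abs_nonneg _) (rowNormalize_le_one hw y j)

theorem measurable_rowNormalize_mulVec [MeasurableSpace Y] (hw : ∀ j, Measurable fun y => w y j)
    (v : ι → ℝ) : Measurable (rowNormalize w *ᵥ v) :=
  Finset.measurable_sum _ fun j _ =>
    ((hw j).div (Finset.measurable_sum _ fun l _ => hw l)).mul_const _

theorem weighted_mean_sub_eq {y : Y} (hw : ∑ l, w y l ≠ 0) (c a : ℝ) (v : ι → ℝ) :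
    c * (∑ j, w y j * (a - v j)) / ∑ l, w y l = c * (a - (rowNormalize w *ᵥ v) y) := by
  simp only [Matrix.mulVec, dotProduct, rowNormalize, Matrix.of_apply, mul_sub,
    Finset.sum_sub_distrib, ← Finset.sum_mul]
  simp only [div_mul_eq_mul_div, ← Finset.sum_div]
  field_simp

end RowNormalize

theorem lpNormR_nonneg {d : ℕ} (p : ℝ≥0∞) (u : Fin d → ℝ) : 0 ≤ lpNormR p u := by
  unfold lpNormR
  split_ifs
  · exact Real.iSup_nonneg fun i => abs_nonneg _
  · exact Real.rpow_nonneg (Finset.sum_nonneg fun i _ => Real.rpow_nonneg (abs_nonneg _) _) _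

theorem measurable_lpNormR {d : ℕ} (p : ℝ≥0∞) : Measurable (lpNormR (d := d) p) := by
  unfold lpNormR
  split_ifs
  · exact Measurable.iSup fun i => (measurable_pi_apply i).abs
  · exact (Finset.measurable_sum _ fun i _ =>
      ((measurable_pi_apply i).abs.pow_const _)).pow_const _

theorem measurable_gaussWeight {d : ℕ} (σ : Fin d → ℝ) : Measurable (gaussWeight σ) :=
  (Finset.measurable_sum _ fun i _ =>
    ((measurable_pi_apply i).pow_const 2).div_const _).neg.exp

theorem integrable_gaussWeight_sq {d : ℕ} {σ : Fin d → ℝ} (hσ : ∀ i, σ i ≠ 0) :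
    Integrable fun x => gaussWeight σ x ^ 2 := by
  have h (x : Fin d → ℝ) : gaussWeight σ x ^ 2 = ∏ i, Real.exp (-(σ i ^ 2)⁻¹ * x i ^ 2) := by
    rw [gaussWeight, ← Real.exp_nat_mul, ← Real.exp_sum, ← Finset.sum_neg_distrib,
      Finset.mul_sum]
    congr 1
    refine Finset.sum_congr rfl fun i _ => ?_
    field_simp [hσ i]
    ring
  simp only [h]
  exact Integrable.fintype_prod fun i =>
    integrable_exp_neg_mul_sq (inv_pos.2 (sq_pos_of_ne_zero (hσ i)))

theorem integrable_sq_mul_gaussWeight_sq_of_abs_le {d : ℕ} {σ : Fin d → ℝ} (hσ : ∀ i, σ i ≠ 0)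
    {f : (Fin d → ℝ) → ℝ} (hf : Measurable f) {C : ℝ} (hC : ∀ y, |f y| ≤ C) :
    Integrable fun y => f y ^ 2 * gaussWeight σ y ^ 2 := by
  refine ((integrable_gaussWeight_sq hσ).const_mul (C ^ 2)).mono'
    ((hf.pow_const 2).mul ((measurable_gaussWeight σ).pow_const 2)).aestronglyMeasurable
    (Filter.Eventually.of_forall fun y => ?_)
  rw [Real.norm_eq_abs, abs_of_nonneg (by positivity)]
  exact mul_le_mul_of_nonneg_right (sq_le_sq' (abs_le.1 (hC y)).1 (abs_le.1 (hC y)).2)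
    (sq_nonneg _)

noncomputable def smoothWeight {d n : ℕ} (p : ℝ≥0∞) (gs : ℝ → ℝ) (α r : ℝ)
    (x : Fin n → Fin d → ℝ) (y : Fin d → ℝ) (j : Fin n) : ℝ :=
  sigmoid (α * (r ^ 2 - lpNormR p (y - x j) ^ 2)) * gs (lpNormR p (y - x j) / r)

section SmoothWeight

variable {d n : ℕ} {p : ℝ≥0∞} {gs : ℝ → ℝ} {α r : ℝ} {x : Fin n → Fin d → ℝ}

theorem smoothWeight_pos (hgs : ∀ t, 0 ≤ t → 0 < gs t) (hr : 0 ≤ r) (y : Fin d → ℝ)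
    (j : Fin n) : 0 < smoothWeight p gs α r x y j :=
  mul_pos (Real.sigmoid_pos _) (hgs _ (div_nonneg (lpNormR_nonneg _ _) hr))

theorem measurable_smoothWeight (hgs : ContinuousOn gs (Set.Ici 0)) (hr : 0 ≤ r) (j : Fin n) :
    Measurable fun y => smoothWeight p gs α r x y j := by
  have hdist : Measurable fun y : Fin d → ℝ => lpNormR p (y - x j) :=
    (measurable_lpNormR p).comp (measurable_id.sub_const _)
  have hgs' : Measurable fun y : Fin d → ℝ => gs (lpNormR p (y - x j) / r) :=
    hgs.domRestrict.measurable.comp ((hdist.div_const r).subtype_mk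
      (h := fun y => div_nonneg (lpNormR_nonneg _ _) hr))
  exact (continuous_sigmoid.measurable.comp
    (measurable_const.mul (measurable_const.sub (hdist.pow_const 2)))).mul hgs'

end SmoothWeight

theorem integrable_rowNormalize_mulVec_sq_mul_gaussWeight_sq {d : ℕ} {σ : Fin d → ℝ}
    (hσ : ∀ i, σ i ≠ 0) {ι : Type*} [Fintype ι] {w : (Fin d → ℝ) → ι → ℝ}
    (hw : ∀ y j, 0 ≤ w y j) (hwm : ∀ j, Measurable fun y => w y j) (v : ι → ℝ) :
    Integrable fun y => (rowNormalize w *ᵥ v) y ^ 2 * gaussWeight σ y ^ 2 :=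
  integrable_sq_mul_gaussWeight_sq_of_abs_le hσ (measurable_rowNormalize_mulVec hwm v)
    (abs_rowNormalize_mulVec_le hw v)

theorem sum_smoothWeight_ne_zero {d n : ℕ} {p : ℝ≥0∞} {gs : ℝ → ℝ} {α r : ℝ}
    {x : Fin n → Fin d → ℝ} (hn : 0 < n) (hgs : ∀ t, 0 ≤ t → 0 < gs t) (hr : 0 ≤ r)
    (y : Fin d → ℝ) : ∑ l, smoothWeight p gs α r x y l ≠ 0 :=
  (Finset.sum_pos (fun j _ => smoothWeight_pos hgs hr y j)
    (Finset.univ_nonempty_iff.2 ⟨⟨0, hn⟩⟩)).ne'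

section RandomWalkLaplacian

variable {d n : ℕ} (hd : 0 < d) (p : ℝ≥0∞) (g gs : ℝ → ℝ) (α r : ℝ) (x : Fin n → Fin d → ℝ)

noncomputable def lapScale : ℝ := 2 * mmt d hd p g 0 / (mmt d hd p g 2 * r ^ 2)

noncomputable def scaledExtension (lam : ℝ) : (Fin n → ℝ) →ₗ[ℝ] (Fin d → ℝ) → ℝ :=
  (lapScale hd p g r / (lapScale hd p g r - lam)) •
    (rowNormalize (smoothWeight p gs α r x)).mulVecLin

theorem empOp_apply_eq (hD : ∀ y, ∑ l, smoothWeight p gs α r x y l ≠ 0)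
    (f : (Fin d → ℝ) → ℝ) (y : Fin d → ℝ) :
    empOp hd p g gs α r x f y =
      lapScale hd p g r * (f y - (rowNormalize (smoothWeight p gs α r x) *ᵥ (f ∘ x)) y) :=
  weighted_mean_sub_eq (hD y) _ _ _

theorem lapLs_mulVec (v : Fin n → ℝ) :
    lapLs hd p g gs α r x *ᵥ v =
      lapScale hd p g r • (v - (rowNormalize (smoothWeight p gs α r x) *ᵥ v) ∘ x) := by
  rw [lapLs, smul_mulVec, sub_mulVec, one_mulVec]
  rfl

variable {hd p g gs α r x} {lam : ℝ}

theorem mem_ker_one_sub_scaledExtension_comp_iff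
    (hD : ∀ y, ∑ l, smoothWeight p gs α r x y l ≠ 0) (hlam : lam ≠ lapScale hd p g r)
    (f : (Fin d → ℝ) → ℝ) :
    f ∈ LinearMap.ker (1 - scaledExtension hd p g gs α r x lam ∘ₗ LinearMap.funLeft ℝ ℝ x) ↔
      ∀ y, empOp hd p g gs α r x f y = lam * f y := by
  rw [scaledExtension, LinearMap.smul_comp, LinearMap.mem_ker_one_sub_smul_iff _ hlam,
    funext_iff]
  simp only [empOp_apply_eq hd p g gs α r x hD]
  rfl

theorem lapLs_mulVec_eq_smul_iff (hlam : lam ≠ lapScale hd p g r) (v : Fin n → ℝ) :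
    lapLs hd p g gs α r x *ᵥ v = lam • v ↔
      v ∈ LinearMap.ker (1 - LinearMap.funLeft ℝ ℝ x ∘ₗ scaledExtension hd p g gs α r x lam) := by
  rw [scaledExtension, LinearMap.comp_smul, LinearMap.mem_ker_one_sub_smul_iff _ hlam,
    lapLs_mulVec]
  rfl

theorem ker_toLin'_lapLs_sub_smul_one (hlam : lam ≠ lapScale hd p g r) :
    LinearMap.ker (toLin' (lapLs hd p g gs α r x - lam • 1)) =
      LinearMap.ker (1 - LinearMap.funLeft ℝ ℝ x ∘ₗ scaledExtension hd p g gs α r x lam) := by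
  ext v
  rw [LinearMap.mem_ker, toLin'_apply, sub_mulVec, smul_mulVec, one_mulVec, sub_eq_zero,
    lapLs_mulVec_eq_smul_iff hlam]

theorem integrable_of_mem_ker_one_sub_scaledExtension_comp {σ : Fin d → ℝ} (hσ : ∀ i, σ i ≠ 0)
    (hgs : ContinuousOn gs (Set.Ici 0)) (hgspos : ∀ t, 0 ≤ t → 0 < gs t) (hr : 0 ≤ r)
    {f : (Fin d → ℝ) → ℝ}
    (hf : f ∈ LinearMap.ker (1 - scaledExtension hd p g gs α r x lam ∘ₗ LinearMap.funLeft ℝ ℝ x)) :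
    Integrable fun y => f y ^ 2 * gaussWeight σ y ^ 2 := by
  rw [← LinearMap.mem_ker_one_sub_iff.1 hf, LinearMap.comp_apply, scaledExtension,
    LinearMap.smul_apply, mulVecLin_apply, ← mulVec_smul]
  exact integrable_rowNormalize_mulVec_sq_mul_gaussWeight_sq hσ
    (fun y j => (smoothWeight_pos hgspos hr y j).le) (measurable_smoothWeight hgs hr) _

end RandomWalkLaplacian

theorem matrix_operator_spectrum_match_general
    (d : ℕ) (hd : 0 < d) (σ : Fin d → ℝ) (hσ : ∀ i, 0 < σ i)
    (p : ℝ≥0∞)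
    (g : ℝ → ℝ)
    (gs : ℝ → ℝ) (hgs : ContDiffOn ℝ 2 gs (Set.Ici 0))
    (hgspos : ∀ y, 0 ≤ y → 0 < gs y)
    (n : ℕ) (hn : 0 < n) (x : Fin n → Fin d → ℝ)
    (r : ℝ) (hr : 0 < r) (α : ℝ)
    (lam : ℝ) (hlam : lam ≠ 2 * mmt d hd p g 0 / (mmt d hd p g 2 * r ^ 2)) :
    ((∃ v : Fin n → ℝ, v ≠ 0 ∧ (lapLs hd p g gs α r x).mulVec v = lam • v) ↔
      (∃ f : (Fin d → ℝ) → ℝ,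
        MeasureTheory.Integrable (fun y => f y ^ 2 * gaussWeight σ y ^ 2) ∧ f ≠ 0 ∧
        ∀ y, empOp hd p g gs α r x f y = lam * f y)) ∧
    ∃ V : Submodule ℝ ((Fin d → ℝ) → ℝ),
      (V : Set ((Fin d → ℝ) → ℝ)) =
        {f | MeasureTheory.Integrable (fun y => f y ^ 2 * gaussWeight σ y ^ 2) ∧
          ∀ y, empOp hd p g gs α r x f y = lam * f y} ∧
      Module.finrank ℝ V =
        Module.finrank ℝ
          (LinearMap.ker (Matrix.toLin' (lapLs hd p g gs α r x - lam • 1))) := by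
  set E := scaledExtension hd p g gs α r x lam
  set R := LinearMap.funLeft ℝ ℝ x
  have hfun (f) : f ∈ LinearMap.ker (1 - E ∘ₗ R) ↔ ∀ y, empOp hd p g gs α r x f y = lam * f y :=
    mem_ker_one_sub_scaledExtension_comp_iff (sum_smoothWeight_ne_zero hn hgspos hr.le) hlam f
  have hF (f) (hf : f ∈ LinearMap.ker (1 - E ∘ₗ R)) :=
    integrable_of_mem_ker_one_sub_scaledExtension_comp (σ := σ) (fun i => (hσ i).ne')
      hgs.continuousOn hgspos hr.le hf
  refine ⟨?_, LinearMap.ker (1 - E ∘ₗ R), ?_, ?_⟩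
  · calc (∃ v, v ≠ 0 ∧ (lapLs hd p g gs α r x).mulVec v = lam • v)
        ↔ LinearMap.ker (1 - R ∘ₗ E) ≠ ⊥ := by
          simp only [lapLs_mulVec_eq_smul_iff hlam, Submodule.ne_bot_iff, and_comm]
          rfl
      _ ↔ LinearMap.ker (1 - E ∘ₗ R) ≠ ⊥ := (LinearMap.ker_one_sub_comp_ne_bot_iff E R).symm
      _ ↔ _ := by
          rw [Submodule.ne_bot_iff]
          exact exists_congr fun f => ⟨fun ⟨hf, h0⟩ => ⟨hF f hf, h0, (hfun f).1 hf⟩,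
            fun ⟨_, h0, h⟩ => ⟨(hfun f).2 h, h0⟩⟩
  · ext f
    exact ⟨fun hf => ⟨hF f hf, (hfun f).1 hf⟩, fun h => (hfun f).2 h.2⟩
  · rw [ker_toLin'_lapLs_sub_smul_one hlam]
    exact (LinearMap.kerOneSubCompEquiv E R).finrank_eq

/-- Lemma `S2Sn`: for every `λ ≠ 2m_0/(m_2 r²)`, `λ` is an eigenvalue of
the matrix `L̃` iff there is a not-identically-zero `f ∈ F` with `L̃_n f = λ f`;
moreover the eigenspace `{f ∈ F : L̃_n f = λf}` is a subspace of the same finite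
dimension as the kernel of `L̃ - λ I` in `ℝⁿ`. -/
theorem matrix_operator_spectrum_match
    (d : ℕ) (hd : 0 < d) (σ : Fin d → ℝ) (hσ : ∀ i, 0 < σ i)
    (p : ℝ≥0∞) (hp : 1 ≤ p)
    (g : ℝ → ℝ) (hg : ContDiffOn ℝ 2 g (Set.Ici 0))
    (c₁ c₂ : ℝ) (hc₁ : 0 < c₁)
    (hgb : ∀ y ∈ Set.Icc (0 : ℝ) 1, c₁ ≤ g y ∧ g y ≤ c₂)
    (gs : ℝ → ℝ) (hgs : ContDiffOn ℝ 2 gs (Set.Ici 0))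
    (hgseq : ∀ y ∈ Set.Icc (0 : ℝ) 1, gs y = g y)
    (hgspos : ∀ y, 0 ≤ y → 0 < gs y)
    (hgsbdd : ∃ Cg : ℝ, ∀ y, 0 ≤ y → gs y ≤ Cg)
    (n : ℕ) (hn : 0 < n) (x : Fin n → Fin d → ℝ)
    (r : ℝ) (hr : 0 < r) (α : ℝ) (hα : 0 < α)
    (lam : ℝ) (hlam : lam ≠ 2 * mmt d hd p g 0 / (mmt d hd p g 2 * r ^ 2)) :
    ((∃ v : Fin n → ℝ, v ≠ 0 ∧ (lapLs hd p g gs α r x).mulVec v = lam • v) ↔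
      (∃ f : (Fin d → ℝ) → ℝ,
        MeasureTheory.Integrable (fun y => f y ^ 2 * gaussWeight σ y ^ 2) ∧ f ≠ 0 ∧
        ∀ y, empOp hd p g gs α r x f y = lam * f y)) ∧
    ∃ V : Submodule ℝ ((Fin d → ℝ) → ℝ),
      (V : Set ((Fin d → ℝ) → ℝ)) =
        {f | MeasureTheory.Integrable (fun y => f y ^ 2 * gaussWeight σ y ^ 2) ∧
          ∀ y, empOp hd p g gs α r x f y = lam * f y} ∧
      Module.finrank ℝ V =
        Module.finrank ℝ
          (LinearMap.ker (Matrix.toLin' (lapLs hd p g gs α r x - lam • 1))) :=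
  matrix_operator_spectrum_match_general d hd σ hσ p g gs hgs hgspos n hn x r hr α lam hlam
end

section
/- For all k, j ∈ ℕ: ∫_ℝ H_k(x)² H_j(x)² e^{−x²} dx ≤ √π · (k+1)! · j! · 8^{k+j}. -/
open MeasureTheory ProbabilityTheory Filter
open scoped ENNReal NNReal BigOperators

/-! The physicist's Hermite polynomials satisfy the linearization formula
`H_k H_j = ∑_m C(k,m) C(j,m) m! 2^m H_{k+j-2m}`, proved by induction on `k` from
`H_{k+1} Q = 2X (H_k Q) - (H_k Q)' + H_k Q'` and `H_{j+1}' = 2(j+1) H_j`.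
Integrating by parts against `e^{-x²}` turns `∫ Q H_n e^{-x²}` into `∫ Q^{(n)} e^{-x²}`,
so the `H_n` are orthogonal with `∫ H_n² e^{-x²} = √π 2^n n!`. Hence
`∫ H_k² H_j² e^{-x²} = √π ∑_m (C(k,m) C(j,m) m! 2^m)² 2^{k+j-2m} (k+j-2m)!`, and bounding
every binomial coefficient by a power of two bounds each of the `min k j + 1` terms
by `√π k! j! 8^{k+j}`. -/

open Polynomial Finset Real
open scoped Nat

section Algebra

variable (R : Type*) [CommRing R]

noncomputable def physHermitePoly : ℕ → R[X]
  | 0 => 1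
  | n + 1 => 2 * X * physHermitePoly n - derivative (physHermitePoly n)

variable {R}

@[simp]
lemma physHermitePoly_zero : physHermitePoly R 0 = 1 := rfl

lemma physHermitePoly_succ (n : ℕ) :
    physHermitePoly R (n + 1) =
      2 * X * physHermitePoly R n - derivative (physHermitePoly R n) := rfl

lemma derivative_physHermitePoly_succ (n : ℕ) :
    derivative (physHermitePoly R (n + 1)) = (2 * (n + 1)) • physHermitePoly R n := by
  induction n with
  | zero => simp [physHermitePoly_succ]
  | succ n ih =>
    rw [physHermitePoly_succ (n + 1), derivative_sub, derivative_mul, ih, derivative_smul,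
      physHermitePoly_succ n]
    simp only [nsmul_eq_mul, derivative_mul, derivative_X, derivative_ofNat]
    push_cast
    ring

lemma iterate_derivative_physHermitePoly_self (n : ℕ) :
    derivative^[n] (physHermitePoly R n) = (2 ^ n * n !) • 1 := by
  induction n with
  | zero => simp
  | succ n ih =>
    rw [Function.iterate_succ_apply, derivative_physHermitePoly_succ, iterate_derivative_smul,
      ih, smul_smul, Nat.factorial_succ]
    congr 1
    ring

lemma iterate_derivative_physHermitePoly_of_lt {n m : ℕ} (h : n < m) :
    derivative^[m] (physHermitePoly R n) = 0 := by
  obtain ⟨c, rfl⟩ := Nat.exists_eq_add_of_lt h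
  rw [show n + c + 1 = c + (n + 1) by omega, Function.iterate_add_apply,
    Function.iterate_succ_apply', iterate_derivative_physHermitePoly_self, derivative_smul,
    derivative_one, smul_zero, iterate_derivative_zero]

lemma sum_nsmul_physHermitePoly_succ {ι : Type*} (s : Finset ι) (c n : ι → ℕ) :
    ∑ i ∈ s, c i • physHermitePoly R (n i + 1) =
      2 * X * ∑ i ∈ s, c i • physHermitePoly R (n i) -
        derivative (∑ i ∈ s, c i • physHermitePoly R (n i)) := by
  simp only [physHermitePoly_succ, smul_sub, sum_sub_distrib, mul_sum, derivative_sum,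
    derivative_smul, mul_smul_comm]

lemma physHermitePoly_succ_mul (k : ℕ) (Q : R[X]) :
    physHermitePoly R (k + 1) * Q =
      2 * X * (physHermitePoly R k * Q) - derivative (physHermitePoly R k * Q) +
        physHermitePoly R k * derivative Q := by
  rw [physHermitePoly_succ, derivative_mul]
  ring

def hermiteProductCoeff (k j m : ℕ) : ℕ := k.choose m * j.choose m * m ! * 2 ^ m

@[simp]
lemma hermiteProductCoeff_zero (k j : ℕ) : hermiteProductCoeff k j 0 = 1 := by
  simp [hermiteProductCoeff]

lemma hermiteProductCoeff_eq_zero_of_lt_left {k j m : ℕ} (h : k < m) : hermiteProductCoeff k j m = 0 := by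
  simp [hermiteProductCoeff, Nat.choose_eq_zero_of_lt h]

lemma hermiteProductCoeff_eq_zero_of_lt_right {k j m : ℕ} (h : j < m) : hermiteProductCoeff k j m = 0 := by
  simp [hermiteProductCoeff, Nat.choose_eq_zero_of_lt h]

lemma hermiteProductCoeff_succ_succ_succ (k j m : ℕ) :
    hermiteProductCoeff (k + 1) (j + 1) (m + 1) =
      hermiteProductCoeff k (j + 1) (m + 1) + 2 * (j + 1) * hermiteProductCoeff k j m := by
  have hj := Nat.add_one_mul_choose_eq j m
  simp only [hermiteProductCoeff, Nat.choose_succ_succ' k m, Nat.factorial_succ]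
  linear_combination (k.choose m * m ! * 2 ^ (m + 1)) * hj.symm

lemma hermiteProductCoeff_sq_mul_le (k j m : ℕ) :
    hermiteProductCoeff k j m ^ 2 * (2 ^ (k + j - 2 * m) * (k + j - 2 * m)!) ≤
      k ! * j ! * 8 ^ (k + j) := by
  rcases lt_or_ge k m with hk | hk
  · simp [hermiteProductCoeff_eq_zero_of_lt_left hk]
  rcases lt_or_ge j m with hj | hj
  · simp [hermiteProductCoeff_eq_zero_of_lt_right hj]
  obtain ⟨a, rfl⟩ := Nat.exists_eq_add_of_le' hk
  obtain ⟨b, rfl⟩ := Nat.exists_eq_add_of_le' hj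
  rw [show a + m + (b + m) - 2 * m = a + b by omega, ← Nat.add_choose_mul_factorial_mul_factorial,
    ← Nat.add_choose_mul_factorial_mul_factorial a m,
    ← Nat.add_choose_mul_factorial_mul_factorial b m]
  calc hermiteProductCoeff (a + m) (b + m) m ^ 2 * (2 ^ (a + b) * ((a + b).choose b * a ! * b !))
      = (a + m).choose m * a ! * m ! * ((b + m).choose m * b ! * m !) *
          ((a + m).choose m * (b + m).choose m * (a + b).choose b *
            (2 ^ (2 * m) * 2 ^ (a + b))) := by
        unfold hermiteProductCoeff
        ring
    _ ≤ (a + m).choose m * a ! * m ! * ((b + m).choose m * b ! * m !) *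
          (2 ^ (a + m) * 2 ^ (b + m) * 2 ^ (a + b) * (2 ^ (2 * m) * 2 ^ (a + b))) := by
        gcongr <;> exact Nat.choose_le_two_pow _ _
    _ ≤ (a + m).choose m * a ! * m ! * ((b + m).choose m * b ! * m !) *
          8 ^ (a + m + (b + m)) := by
        gcongr
        rw [show (8 : ℕ) = 2 ^ 3 by norm_num, ← pow_mul, ← pow_add, ← pow_add, ← pow_add,
          ← pow_add]
        exact Nat.pow_le_pow_right (by norm_num) (by omega)

theorem physHermitePoly_mul_physHermitePoly (k j : ℕ) :
    physHermitePoly R k * physHermitePoly R j =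
      ∑ m ∈ range (k + 1), hermiteProductCoeff k j m • physHermitePoly R (k + j - 2 * m) := by
  induction k generalizing j with
  | zero => simp
  | succ k ih =>
    cases j with
    | zero => simp [sum_range_succ', hermiteProductCoeff_eq_zero_of_lt_right]
    | succ j =>
    -- Where `k + j - 2 * m` is truncated, the coefficient vanishes because `j < m`.
    have raised : ∑ m ∈ range (k + 1),
        hermiteProductCoeff k (j + 1) m • physHermitePoly R (k + 1 + (j + 1) - 2 * m) =
          2 * X * (physHermitePoly R k * physHermitePoly R (j + 1)) -
            derivative (physHermitePoly R k * physHermitePoly R (j + 1)) := by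
      rw [ih, ← sum_nsmul_physHermitePoly_succ]
      refine sum_congr rfl fun m hm => ?_
      rcases le_or_gt m (j + 1) with h | h
      · have := mem_range.mp hm
        congr 2
        omega
      · simp [hermiteProductCoeff_eq_zero_of_lt_right h]
    have lowered : ∑ m ∈ range (k + 1), (2 * (j + 1) * hermiteProductCoeff k j m) •
        physHermitePoly R (k + 1 + (j + 1) - 2 * (m + 1)) =
          physHermitePoly R k * derivative (physHermitePoly R (j + 1)) := by
      rw [derivative_physHermitePoly_succ, mul_smul_comm, ih, smul_sum]
      refine sum_congr rfl fun m _ => ?_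
      rw [smul_smul]
      congr 2
      omega
    have shifted : ∑ m ∈ range (k + 1),
        hermiteProductCoeff k (j + 1) m • physHermitePoly R (k + 1 + (j + 1) - 2 * m) =
          ∑ m ∈ range (k + 1), hermiteProductCoeff k (j + 1) (m + 1) •
            physHermitePoly R (k + 1 + (j + 1) - 2 * (m + 1)) +
          physHermitePoly R (k + 1 + (j + 1)) := by
      rw [sum_range_succ', sum_range_succ _ k, hermiteProductCoeff_eq_zero_of_lt_left k.lt_succ_self]
      simp
    rw [physHermitePoly_succ_mul, ← raised, ← lowered, shifted, sum_range_succ' _ (k + 1)]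
    simp only [hermiteProductCoeff_succ_succ_succ, add_smul, sum_add_distrib,
      hermiteProductCoeff_zero, one_smul, mul_zero, Nat.sub_zero]
    abel

lemma physHermitePoly_mul_eq_sum_range_min (k j : ℕ) :
    physHermitePoly R k * physHermitePoly R j =
      ∑ m ∈ range (min k j + 1), hermiteProductCoeff k j m • physHermitePoly R (k + j - 2 * m) := by
  rw [physHermitePoly_mul_physHermitePoly]
  refine (sum_subset (range_subset_range.mpr (by omega)) fun m hm hm' => ?_).symm
  simp only [mem_range] at hm hm'
  rw [hermiteProductCoeff_eq_zero_of_lt_right (by omega), zero_smul]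

end Algebra

lemma integrable_eval_mul_exp_neg_sq (P : ℝ[X]) :
    Integrable fun x => P.eval x * exp (-x ^ 2) := by
  induction P using Polynomial.induction_on' with
  | add P Q hP hQ =>
    simp only [eval_add, add_mul]
    exact hP.add hQ
  | monomial n a =>
    have := integrable_rpow_mul_exp_neg_mul_sq one_pos (s := n)
      (by linarith [n.cast_nonneg (α := ℝ)])
    simp only [rpow_natCast, neg_mul, one_mul] at this
    simpa only [eval_monomial, mul_assoc] using this.const_mul a

noncomputable def gaussianPolyIntegral : ℝ[X] →ₗ[ℝ] ℝ where
  toFun P := ∫ x, P.eval x * exp (-x ^ 2)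
  map_add' P Q := by
    simp only [eval_add, add_mul]
    exact integral_add (integrable_eval_mul_exp_neg_sq P) (integrable_eval_mul_exp_neg_sq Q)
  map_smul' c P := by
    simp only [eval_smul, smul_eq_mul, mul_assoc, RingHom.id_apply]
    exact integral_const_mul c _

lemma gaussianPolyIntegral_apply (P : ℝ[X]) :
    gaussianPolyIntegral P = ∫ x, P.eval x * exp (-x ^ 2) := rfl

lemma gaussianPolyIntegral_one : gaussianPolyIntegral 1 = √π := by
  simpa [gaussianPolyIntegral_apply] using integral_gaussian 1

lemma hasDerivAt_eval_physHermitePoly_mul_exp (n : ℕ) (x : ℝ) :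
    HasDerivAt (fun t => (physHermitePoly ℝ n).eval t * exp (-t ^ 2))
      (-((physHermitePoly ℝ (n + 1)).eval x * exp (-x ^ 2))) x := by
  have hexp : HasDerivAt (fun t : ℝ => exp (-t ^ 2)) (exp (-x ^ 2) * -(2 * x)) x := by
    simpa using ((hasDerivAt_pow 2 x).neg).exp
  refine (((physHermitePoly ℝ n).hasDerivAt x).mul hexp).congr_deriv ?_
  simp only [physHermitePoly_succ, eval_sub, eval_mul, eval_X, eval_ofNat]
  ring

lemma iteratedDeriv_exp_neg_sq (n : ℕ) :
    iteratedDeriv n (fun t => exp (-t ^ 2)) =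
      fun x => (-1) ^ n * ((physHermitePoly ℝ n).eval x * exp (-x ^ 2)) := by
  induction n with
  | zero => simp
  | succ n ih =>
    ext x
    rw [iteratedDeriv_succ, ih, ((hasDerivAt_eval_physHermitePoly_mul_exp n x).const_mul _).deriv]
    ring

lemma physHermite_eq_eval (n : ℕ) (x : ℝ) : physHermite n x = (physHermitePoly ℝ n).eval x := by
  rw [physHermite, iteratedDeriv_exp_neg_sq]
  have hsign : ((-1 : ℝ) ^ n) * (-1) ^ n = 1 := by rw [← mul_pow]; simp
  have hexp : exp (x ^ 2) * exp (-x ^ 2) = 1 := by rw [← exp_add]; simp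
  linear_combination ((physHermitePoly ℝ n).eval x * (-1) ^ n * (-1) ^ n) * hexp +
    (physHermitePoly ℝ n).eval x * hsign

lemma gaussianPolyIntegral_mul_physHermitePoly_succ (Q : ℝ[X]) (n : ℕ) :
    gaussianPolyIntegral (Q * physHermitePoly ℝ (n + 1)) =
      gaussianPolyIntegral (derivative Q * physHermitePoly ℝ n) := by
  have hibp := integral_mul_deriv_eq_deriv_mul_of_integrable
    (fun x _ => Q.hasDerivAt x) (fun x _ => hasDerivAt_eval_physHermitePoly_mul_exp n x)
    (by simpa [Pi.mul_def, mul_assoc] using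
      (integrable_eval_mul_exp_neg_sq (Q * physHermitePoly ℝ (n + 1))).neg)
    (by simpa [Pi.mul_def, mul_assoc] using
      integrable_eval_mul_exp_neg_sq (derivative Q * physHermitePoly ℝ n))
    (by simpa [Pi.mul_def, mul_assoc] using
      integrable_eval_mul_exp_neg_sq (Q * physHermitePoly ℝ n))
  simp only [gaussianPolyIntegral_apply, eval_mul, mul_assoc, mul_neg, integral_neg] at hibp ⊢
  linarith

lemma gaussianPolyIntegral_mul_physHermitePoly (Q : ℝ[X]) (n : ℕ) :
    gaussianPolyIntegral (Q * physHermitePoly ℝ n) = gaussianPolyIntegral (derivative^[n] Q) := by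
  induction n generalizing Q with
  | zero => simp
  | succ n ih =>
    rw [gaussianPolyIntegral_mul_physHermitePoly_succ, ih, Function.iterate_succ_apply]

lemma gaussianPolyIntegral_physHermitePoly_mul_physHermitePoly (a b : ℕ) :
    gaussianPolyIntegral (physHermitePoly ℝ a * physHermitePoly ℝ b) =
      if a = b then √π * (2 ^ a * a !) else 0 := by
  rcases lt_trichotomy a b with h | rfl | h
  · rw [gaussianPolyIntegral_mul_physHermitePoly, iterate_derivative_physHermitePoly_of_lt h,
      map_zero, if_neg h.ne]
  · rw [gaussianPolyIntegral_mul_physHermitePoly, iterate_derivative_physHermitePoly_self,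
      map_nsmul, gaussianPolyIntegral_one, if_pos rfl, nsmul_eq_mul]
    push_cast
    ring
  · rw [mul_comm, gaussianPolyIntegral_mul_physHermitePoly,
      iterate_derivative_physHermitePoly_of_lt h, map_zero, if_neg h.ne']

lemma gaussianPolyIntegral_sum_sq {ι : Type*} (s : Finset ι) (c : ι → ℝ) (n : ι → ℕ)
    (hn : Set.InjOn n s) :
    gaussianPolyIntegral ((∑ i ∈ s, c i • physHermitePoly ℝ (n i)) ^ 2) =
      √π * ∑ i ∈ s, c i ^ 2 * (2 ^ n i * (n i)!) := by
  rw [sq, sum_mul_sum, map_sum, mul_sum]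
  refine sum_congr rfl fun i hi => ?_
  simp only [map_sum, smul_mul_smul_comm, map_smul,
    gaussianPolyIntegral_physHermitePoly_mul_physHermitePoly, smul_eq_mul]
  rw [sum_eq_single i (fun i' hi' hne => by rw [if_neg fun h => hne (hn hi' hi h.symm), mul_zero])
    (fun h => absurd hi h), if_pos rfl]
  ring

/-- Lemma `hermitenielsen`:
`∫ H_k(x)² H_j(x)² e^{-x²} dx ≤ √π (k+1)! j! 8^{k+j}`. -/
theorem hermite_product_norm_bound (k j : ℕ) :
    (∫ x : ℝ, physHermite k x ^ 2 * physHermite j x ^ 2 * Real.exp (-x ^ 2)) ≤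
      Real.sqrt Real.pi * ((k + 1).factorial : ℝ) * (j.factorial : ℝ) * 8 ^ (k + j) := by
  have hinj : Set.InjOn (fun m => k + j - 2 * m) (range (min k j + 1)) := by
    intro m hm m' hm' h
    simp only [coe_range, Set.mem_Iio] at hm hm' h
    omega
  calc (∫ x : ℝ, physHermite k x ^ 2 * physHermite j x ^ 2 * Real.exp (-x ^ 2))
      = gaussianPolyIntegral ((physHermitePoly ℝ k * physHermitePoly ℝ j) ^ 2) := by
        simp only [gaussianPolyIntegral_apply, physHermite_eq_eval, eval_pow, eval_mul, mul_pow]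
    _ = √π * ∑ m ∈ range (min k j + 1), (hermiteProductCoeff k j m : ℝ) ^ 2 *
          (2 ^ (k + j - 2 * m) * (k + j - 2 * m)!) := by
        simp_rw [physHermitePoly_mul_eq_sum_range_min, ← Nat.cast_smul_eq_nsmul ℝ]
        exact gaussianPolyIntegral_sum_sq _ _ _ hinj
    _ ≤ √π * ∑ m ∈ range (min k j + 1), (k ! * j ! * 8 ^ (k + j) : ℝ) := by
        gcongr √π * ∑ m ∈ _, ?_ with m
        exact_mod_cast hermiteProductCoeff_sq_mul_le k j m
    _ ≤ √π * ((k + 1) * (k ! * j ! * 8 ^ (k + j))) := by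
        rw [sum_const, card_range, nsmul_eq_mul]
        gcongr
        exact_mod_cast Nat.succ_le_succ (min_le_left k j)
    _ = Real.sqrt Real.pi * ((k + 1).factorial : ℝ) * (j.factorial : ℝ) * 8 ^ (k + j) := by
        rw [Nat.factorial_succ]
        push_cast
        ring
end

section
/- Let B_n = ∏_{i=1}^d [−σ_i √(log n/(d²/4 + d + 1)), σ_i √(log n/(d²/4 + d + 1))]. Then the probability of the event { #{j ∈ {1, …, n} : x_j ∉ B_n} ≤ 3d · n^{1 − 2/(d+2)²} } tends to 1 as n → ∞; that is, with high probability at most O(n^{1 − 2/(d+2)²}) of the n Gaussian sample points fall outside the bulk region B_n. -/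
open MeasureTheory ProbabilityTheory Filter
open scoped ENNReal NNReal BigOperators

/-! On `(t, ∞)` the standard Gaussian density is dominated by `e^{-t x / 2} / √(2π)`, which gives
Mills' bound `P(Z > t) ≤ e^{-t²/2} / t`. A union bound over the coordinates turns this into a bound
`2d e^{-t²/2} / t` on the probability that a sample leaves the box `{|x_i| ≤ σ_i t}`. With
`t² = log n / c`, `c = (d + 2)² / 4`, that probability is `2d n^{-2/(d+2)²} / t`, so the expected
number of the `n` points outside the box is `2d n^{1-2/(d+2)²} / t`, and Markov's inequality bounds
the probability that more than `3d n^{1-2/(d+2)²}` of them lie outside by `2 / (3t) → 0`. -/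

open Real Set

lemma gaussianReal_zero_one_Ioi_le {t : ℝ} (ht : 0 < t) :
    gaussianReal 0 1 (Ioi t) ≤ ENNReal.ofReal (exp (-(t ^ 2 / 2)) / t) := by
  have h2π : 2 ≤ √(2 * π) :=
    le_sqrt_of_sq_le (by nlinarith [pi_gt_three])
  rw [gaussianReal_apply_eq_integral 0 one_ne_zero]
  refine ENNReal.ofReal_le_ofReal ?_
  calc ∫ x in Ioi t, gaussianPDFReal 0 1 x
      ≤ ∫ x in Ioi t, (√(2 * π))⁻¹ * exp (-(t / 2) * x) := by
        refine setIntegral_mono_on (integrable_gaussianPDFReal 0 1).integrableOn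
          ((exp_neg_integrableOn_Ioi t (by positivity)).const_mul _) measurableSet_Ioi
          fun x hx => ?_
        have htx : t * x ≤ x ^ 2 := by nlinarith [mem_Ioi.mp hx]
        simp only [gaussianPDFReal, NNReal.coe_one, mul_one, sub_zero]
        gcongr
        linarith
    _ = (√(2 * π))⁻¹ * (2 / t * exp (-(t ^ 2 / 2))) := by
        rw [integral_const_mul]
        have := integral_comp_mul_left_Ioi (fun x => exp (-x)) t (half_pos ht)
        simp only [neg_mul] at this ⊢
        rw [this, integral_exp_neg_Ioi, smul_eq_mul]
        field_simp
    _ ≤ exp (-(t ^ 2 / 2)) / t := by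
        have hc : 2 / √(2 * π) ≤ 1 := (div_le_one (by positivity)).mpr h2π
        calc (√(2 * π))⁻¹ * (2 / t * exp (-(t ^ 2 / 2)))
            = 2 / √(2 * π) * (exp (-(t ^ 2 / 2)) / t) := by ring
          _ ≤ 1 * (exp (-(t ^ 2 / 2)) / t) := by gcongr
          _ = exp (-(t ^ 2 / 2)) / t := one_mul _

lemma gaussianReal_zero_one_abs_gt_le {t : ℝ} (ht : 0 < t) :
    gaussianReal 0 1 {y | t < |y|} ≤ ENNReal.ofReal (2 * exp (-(t ^ 2 / 2)) / t) := by
  have hsplit : {y : ℝ | t < |y|} = Ioi t ∪ (fun y => -y) ⁻¹' Ioi t := by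
    ext y
    simp only [mem_ofPred_eq, mem_union, mem_Ioi, mem_preimage, lt_abs]
  have hsymm : gaussianReal 0 1 ((fun y => -y) ⁻¹' Ioi t) = gaussianReal 0 1 (Ioi t) := by
    rw [← Measure.map_apply measurable_neg measurableSet_Ioi, gaussianReal_map_neg, neg_zero]
  calc gaussianReal 0 1 {y | t < |y|}
      ≤ gaussianReal 0 1 (Ioi t) + gaussianReal 0 1 ((fun y => -y) ⁻¹' Ioi t) :=
        hsplit ▸ measure_union_le _ _
    _ ≤ ENNReal.ofReal (exp (-(t ^ 2 / 2)) / t) + ENNReal.ofReal (exp (-(t ^ 2 / 2)) / t) := by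
        rw [hsymm]
        exact add_le_add (gaussianReal_zero_one_Ioi_le ht) (gaussianReal_zero_one_Ioi_le ht)
    _ = ENNReal.ofReal (2 * exp (-(t ^ 2 / 2)) / t) := by
        rw [← ENNReal.ofReal_add (by positivity) (by positivity)]
        ring_nf

lemma gaussianReal_abs_gt_le {σ : ℝ} (hσ : 0 < σ) {t : ℝ} (ht : 0 < t) :
    gaussianReal 0 (σ ^ 2).toNNReal {y | σ * t < |y|}
      ≤ ENNReal.ofReal (2 * exp (-(t ^ 2 / 2)) / t) := by
  have hscale : gaussianReal 0 (σ ^ 2).toNNReal = (gaussianReal 0 1).map (σ * ·) := by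
    rw [gaussianReal_map_const_mul, mul_zero, mul_one]
    congr
    exact NNReal.eq (Real.coe_toNNReal _ (sq_nonneg σ))
  have hpre : (σ * ·) ⁻¹' {y | σ * t < |y|} = {y | t < |y|} := by
    ext y
    simp only [mem_preimage, mem_ofPred_eq, abs_mul, abs_of_pos hσ, mul_lt_mul_iff_right₀ hσ]
  rw [hscale, Measure.map_apply (measurable_const_mul σ)
    (measurableSet_lt measurable_const measurable_abs), hpre]
  exact gaussianReal_zero_one_abs_gt_le ht

def scaledBox {d : ℕ} (σ : Fin d → ℝ) (t : ℝ) : Set (Fin d → ℝ) :=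
  {x | ∀ i, |x i| ≤ σ i * t}

lemma measurableSet_scaledBox {d : ℕ} (σ : Fin d → ℝ) (t : ℝ) :
    MeasurableSet (scaledBox σ t) := by
  simp only [scaledBox, ofPred_forall]
  exact MeasurableSet.iInter fun i => measurableSet_le (measurable_pi_apply i).abs measurable_const

lemma gaussPi_compl_scaledBox_le {d : ℕ} {σ : Fin d → ℝ} (hσ : ∀ i, 0 < σ i) {t : ℝ}
    (ht : 0 < t) :
    gaussPi d σ (scaledBox σ t)ᶜ ≤ ENNReal.ofReal (d * (2 * exp (-(t ^ 2 / 2)) / t)) := by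
  have hunion : (scaledBox σ t)ᶜ = ⋃ i, Function.eval i ⁻¹' {y | σ i * t < |y|} := by
    ext x
    simp [scaledBox]
  have hcoord : ∀ i, gaussPi d σ (Function.eval i ⁻¹' {y | σ i * t < |y|})
      ≤ ENNReal.ofReal (2 * exp (-(t ^ 2 / 2)) / t) := fun i => by
    rw [gaussPi, (measurePreserving_eval _ i).measure_preimage
      (measurableSet_lt measurable_const measurable_abs).nullMeasurableSet]
    exact gaussianReal_abs_gt_le (hσ i) ht
  calc gaussPi d σ (scaledBox σ t)ᶜ
      ≤ ∑ i, gaussPi d σ (Function.eval i ⁻¹' {y | σ i * t < |y|}) :=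
        hunion ▸ measure_iUnion_fintype_le _ _
    _ ≤ ∑ _i : Fin d, ENNReal.ofReal (2 * exp (-(t ^ 2 / 2)) / t) :=
        Finset.sum_le_sum fun i _ => hcoord i
    _ = ENNReal.ofReal (d * (2 * exp (-(t ^ 2 / 2)) / t)) := by
        rw [Finset.sum_const, Finset.card_univ, Fintype.card_fin, nsmul_eq_mul,
          ENNReal.ofReal_mul (Nat.cast_nonneg d), ENNReal.ofReal_natCast]

lemma measure_lt_card_filter_le {Ω ι : Type*} [MeasurableSpace Ω] [Fintype ι] (μ : Measure Ω)
    {P : ι → Ω → Prop} [∀ ω, DecidablePred fun j => P j ω]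
    (hP : ∀ j, MeasurableSet {ω | P j ω}) {p a : ℝ} (hp : ∀ j, μ {ω | P j ω} ≤ ENNReal.ofReal p)
    (ha : 0 < a) :
    μ {ω | a < ((Finset.univ.filter fun j => P j ω).card : ℝ)}
      ≤ ENNReal.ofReal (Fintype.card ι * p / a) := by
  set N : Ω → ℝ≥0∞ := fun ω => ∑ j, {ω | P j ω}.indicator 1 ω
  have hN : ∀ ω, (((Finset.univ.filter fun j => P j ω).card : ℕ) : ℝ≥0∞) = N ω := fun ω => by
    simp only [N, Finset.card_filter, Nat.cast_sum]
    exact Finset.sum_congr rfl fun j _ => by by_cases h : P j ω <;> simp [h]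
  have hmean : ∫⁻ ω, N ω ∂μ ≤ ENNReal.ofReal (Fintype.card ι * p) := by
    rw [lintegral_finsetSum _ fun j _ => measurable_one.indicator (hP j)]
    calc ∑ j, ∫⁻ ω, {ω | P j ω}.indicator 1 ω ∂μ
        = ∑ j, μ {ω | P j ω} := Finset.sum_congr rfl fun j _ => lintegral_indicator_one (hP j)
      _ ≤ ∑ _j : ι, ENNReal.ofReal p := Finset.sum_le_sum fun j _ => hp j
      _ = ENNReal.ofReal (Fintype.card ι * p) := by
          rw [Finset.sum_const, Finset.card_univ, nsmul_eq_mul,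
            ENNReal.ofReal_mul (Nat.cast_nonneg _), ENNReal.ofReal_natCast]
  calc μ {ω | a < ((Finset.univ.filter fun j => P j ω).card : ℝ)}
      ≤ μ {ω | ENNReal.ofReal a ≤ N ω} := measure_mono fun ω hω => by
        simp only [mem_ofPred_eq] at hω ⊢
        rw [← hN, ← ENNReal.ofReal_natCast]
        exact ENNReal.ofReal_le_ofReal (le_of_lt hω)
    _ ≤ (∫⁻ ω, N ω ∂μ) / ENNReal.ofReal a :=
        meas_ge_le_lintegral_div (Finset.measurable_sum _ fun j _ =>
          measurable_one.indicator (hP j)).aemeasurable (by simpa using ha) ENNReal.ofReal_ne_top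
    _ ≤ ENNReal.ofReal (Fintype.card ι * p) / ENNReal.ofReal a := by gcongr
    _ = ENNReal.ofReal (Fintype.card ι * p / a) := (ENNReal.ofReal_div_of_pos ha).symm

lemma tendsto_measure_of_tendsto_measure_compl {Ω α : Type*} [MeasurableSpace Ω]
    {μ : Measure Ω} [IsProbabilityMeasure μ] {l : Filter α} {E : α → Set Ω}
    (h : Tendsto (fun n => μ (E n)ᶜ) l (nhds 0)) : Tendsto (fun n => μ (E n)) l (nhds 1) := by
  have hlower : ∀ n, 1 - μ (E n)ᶜ ≤ μ (E n) := fun n => by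
    rw [tsub_le_iff_right, ← measure_univ (μ := μ), ← union_compl_self (E n)]
    exact measure_union_le _ _
  refine tendsto_of_tendsto_of_tendsto_of_le_of_le ?_ tendsto_const_nhds hlower
    fun n => prob_le_one
  simpa using ENNReal.Tendsto.sub tendsto_const_nhds h (Or.inl ENNReal.one_ne_top)

lemma measure_lt_card_compl_scaledBox_le {d : ℕ} {σ : Fin d → ℝ} (hσ : ∀ i, 0 < σ i)
    {Ω : Type*} [MeasurableSpace Ω] (μ : Measure Ω) (X : ℕ → Ω → (Fin d → ℝ))
    (hXmeas : ∀ j, Measurable (X j)) (hXdist : ∀ j, μ.map (X j) = gaussPi d σ)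
    (n : ℕ) {t a : ℝ} (ht : 0 < t) (ha : 0 < a) :
    μ {ω | a < ((Finset.univ.filter fun j : Fin n => ¬ ∀ i, |X j ω i| ≤ σ i * t).card : ℝ)}
      ≤ ENNReal.ofReal (n * (d * (2 * exp (-(t ^ 2 / 2)) / t)) / a) := by
  have hout : MeasurableSet (scaledBox σ t)ᶜ := (measurableSet_scaledBox σ t).compl
  have hX : ∀ j : Fin n, μ (X j ⁻¹' (scaledBox σ t)ᶜ)
      ≤ ENNReal.ofReal (d * (2 * exp (-(t ^ 2 / 2)) / t)) := fun j => by
    rw [← Measure.map_apply (hXmeas j) hout, hXdist j]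
    exact gaussPi_compl_scaledBox_le hσ ht
  simpa using measure_lt_card_filter_le μ
    (P := fun (j : Fin n) ω => ¬ ∀ i, |X j ω i| ≤ σ i * t) (fun j => hXmeas j hout) hX ha

lemma exp_neg_sq_sqrt_log_div {x c : ℝ} (hx : 1 ≤ x) (hc : 0 < c) :
    exp (-(√(log x / c) ^ 2 / 2)) = x ^ (-(2 * c)⁻¹) := by
  rw [sq_sqrt (div_nonneg (log_nonneg hx) hc.le), rpow_def_of_pos (by linarith)]
  congr 1
  field_simp

theorem tail_points_count_general
    (d : ℕ) (hd : 0 < d) (σ : Fin d → ℝ) (hσ : ∀ i, 0 < σ i)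
    {Ω : Type*} [MeasurableSpace Ω] (μ : Measure Ω) [IsProbabilityMeasure μ]
    (X : ℕ → Ω → (Fin d → ℝ)) (hXmeas : ∀ j, Measurable (X j))
    (hXdist : ∀ j, μ.map (X j) = gaussPi d σ) :
    Tendsto (fun n : ℕ =>
        μ {ω | ((Finset.univ.filter fun j : Fin n =>
              ¬ ∀ i, |X j ω i| ≤
                σ i * Real.sqrt (Real.log n / ((d : ℝ) ^ 2 / 4 + d + 1))).card : ℝ) ≤
            3 * d * (n : ℝ) ^ (1 - 2 / ((d : ℝ) + 2) ^ 2)})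
      atTop (nhds 1) := by
  set c : ℝ := (d : ℝ) ^ 2 / 4 + d + 1
  set β : ℝ := 2 / ((d : ℝ) + 2) ^ 2
  have hc : 0 < c := by positivity
  have hβ : (2 * c)⁻¹ = β := by simp only [c, β]; field_simp; ring
  have ht : Tendsto (fun n : ℕ => √(log n / c)) atTop atTop :=
    tendsto_sqrt_atTop.comp <|
      (tendsto_log_atTop.comp tendsto_natCast_atTop_atTop).atTop_div_const hc
  have hbound :
      Tendsto (fun n : ℕ => ENNReal.ofReal (2 / (3 * √(log n / c)))) atTop (nhds 0) := by
    simpa using ENNReal.tendsto_ofReal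
      (tendsto_const_nhds.div_atTop (ht.const_mul_atTop (by norm_num : (0 : ℝ) < 3)))
  refine tendsto_measure_of_tendsto_measure_compl ?_
  simp only [compl_ofPred, not_le]
  refine tendsto_of_tendsto_of_tendsto_of_le_of_le' tendsto_const_nhds hbound
    (Eventually.of_forall fun _ => zero_le) ?_
  filter_upwards [eventually_ge_atTop 2] with n hn
  have hn1 : (1 : ℝ) < n := by exact_mod_cast hn
  have htn : 0 < √(log n / c) := sqrt_pos.mpr (div_pos (log_pos hn1) hc)
  refine (measure_lt_card_compl_scaledBox_le hσ μ X hXmeas hXdist n htn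
    (by positivity)).trans_eq ?_
  rw [exp_neg_sq_sqrt_log_div hn1.le hc, hβ, sub_eq_add_neg, rpow_add (by linarith), rpow_one]
  congr 1
  field_simp

/-- with probability tending to one, at most `3d·n^{1-2/(d+2)²}` of the `n`
Gaussian sample points fall outside the bulk region
`B_n = ∏ [-σ_i √(log n/(d²/4+d+1)), σ_i √(log n/(d²/4+d+1))]`. -/
theorem tail_points_count
    (d : ℕ) (hd : 0 < d) (σ : Fin d → ℝ) (hσ : ∀ i, 0 < σ i)
    {Ω : Type*} [MeasurableSpace Ω] (μ : Measure Ω) [IsProbabilityMeasure μ]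
    (X : ℕ → Ω → (Fin d → ℝ)) (hXmeas : ∀ j, Measurable (X j))
    (hXindep : iIndepFun X μ)
    (hXdist : ∀ j, μ.map (X j) = gaussPi d σ) :
    Tendsto (fun n : ℕ =>
        μ {ω | ((Finset.univ.filter fun j : Fin n =>
              ¬ ∀ i, |X j ω i| ≤
                σ i * Real.sqrt (Real.log n / ((d : ℝ) ^ 2 / 4 + d + 1))).card : ℝ) ≤
            3 * d * (n : ℝ) ^ (1 - 2 / ((d : ℝ) + 2) ^ 2)})
      atTop (nhds 1) :=
  tail_points_count_general d hd σ hσ μ X hXmeas hXdist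
end
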